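/- Let Ω, K ⊂ ℝⁿ be convex bodies with nonempty interior, r = r(Ω,K), and suppose that for some λ* ∈ [0, r) the volume satisfies V_n(Ω ∼ λK) = ((r−λ)/(r−λ*))ⁿ · V_n(Ω ∼ λ*K) for all λ ∈ [λ*, r]. Then for every λ ∈ [λ*, r), the inner parallel body Ω ∼ λK is homothetic to Ω ∼ λ*K; more precisely, after a suitable translation, Ω ∼ λK = ((r−λ)/(r−λ*))·(Ω ∼ λ*K). -/

import Mathlib

/-!
If `x₀ + rK ⊆ Ω` (the inradius is attained, by compactness) and `c = (r-λ)/(r-λ*)`, convexity of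
`Ω` gives `(1-c)x₀ + c(Ω ∼ λ*K) ⊆ Ω ∼ λK`. The volume hypothesis says both sides have the same
volume; since the smaller set is closed and the larger one is convex with nonempty interior,
they coincide.
-/

open Pointwise MeasureTheory Set

noncomputable section

/-- The inner parallel body `Ω ∼ λK = {x : x + λK ⊆ Ω}`. -/
def innerPar {n : ℕ} (Ω K : Set (EuclideanSpace ℝ (Fin n))) (l : ℝ) :
    Set (EuclideanSpace ℝ (Fin n)) :=
  {x | ∀ y ∈ K, x + l • y ∈ Ω}

/-- The inradius of `Ω` relative to `K`. -/
def inrad {n : ℕ} (Ω K : Set (EuclideanSpace ℝ (Fin n))) : ℝ :=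
  sSup {l : ℝ | 0 ≤ l ∧ ∃ x, ∀ y ∈ K, x + l • y ∈ Ω}

/-- The anisotropic perimeter of `C` relative to `K`, realized as the anisotropic
Minkowski content `d/dt V_n(C + tK) |_{t=0⁺}`. -/
def aniPer {n : ℕ} (C K : Set (EuclideanSpace ℝ (Fin n))) : ℝ :=
  derivWithin (fun t : ℝ => (volume (C + t • K)).toReal) (Set.Ici (0:ℝ)) 0

/-- The mixed volume `V(C,…,C,K,…,K)` with `i` copies of `K`, extracted as the
`i`-th Taylor coefficient (over `binom n i`) of `t ↦ V_n(C + tK)` at `t = 0⁺`. -/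
def mixedVol {n : ℕ} (i : ℕ) (C K : Set (EuclideanSpace ℝ (Fin n))) : ℝ :=
  iteratedDerivWithin i (fun t : ℝ => (volume (C + t • K)).toReal) (Set.Ici (0:ℝ)) 0
    / (n.choose i * i.factorial)

theorem Convex.eq_of_isClosed_subset_of_measure_eq {E : Type*} [AddCommGroup E] [Module ℝ E]
    [TopologicalSpace E] [IsTopologicalAddGroup E] [ContinuousSMul ℝ E] [MeasurableSpace E]
    [OpensMeasurableSpace E] {μ : Measure E} [μ.IsOpenPosMeasure] {S B : Set E}
    (hB : Convex ℝ B) (hBint : (interior B).Nonempty) (hS : IsClosed S) (hSB : S ⊆ B)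
    (hμ : μ B = μ S) (hμS : μ S ≠ ⊤) : S = B := by
  have hnull : μ (B \ S) = 0 := by
    rw [measure_sdiff hSB hS.measurableSet.nullMeasurableSet hμS, hμ, tsub_self]
  have hint : interior B ⊆ S := by
    by_contra h
    obtain ⟨x, hxB, hxS⟩ := not_subset.1 h
    have hpos : 0 < μ (interior B \ S) :=
      (isOpen_interior.sdiff hS).measure_pos μ ⟨x, hxB, hxS⟩
    exact hpos.ne' (measure_mono_null (sdiff_subset_sdiff_left interior_subset) hnull)
  refine hSB.antisymm fun x hx => ?_
  rw [← hS.closure_eq]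
  exact closure_mono hint (hB.closure_interior_eq_closure_of_nonempty_interior hBint ▸
    subset_closure hx)

section InnerParallelBody

variable {n : ℕ} {Ω K : Set (EuclideanSpace ℝ (Fin n))}

theorem inrad_eq_sSup : inrad Ω K = sSup {l : ℝ | 0 ≤ l ∧ (innerPar Ω K l).Nonempty} := rfl

theorem smul_add_smul_mem_innerPar (hΩ : Convex ℝ Ω) {a b l₁ l₂ : ℝ} (ha : 0 ≤ a) (hb : 0 ≤ b)
    (hab : a + b = 1) {x₁ x₂ : EuclideanSpace ℝ (Fin n)} (hx₁ : x₁ ∈ innerPar Ω K l₁)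
    (hx₂ : x₂ ∈ innerPar Ω K l₂) : a • x₁ + b • x₂ ∈ innerPar Ω K (a * l₁ + b * l₂) := by
  intro y hy
  have hcombo : a • x₁ + b • x₂ + (a * l₁ + b * l₂) • y
      = a • (x₁ + l₁ • y) + b • (x₂ + l₂ • y) := by module
  rw [hcombo]
  exact hΩ (hx₁ y hy) (hx₂ y hy) ha hb hab

theorem vadd_smul_innerPar_subset (hΩ : Convex ℝ Ω) {c l r : ℝ} (hc : 0 ≤ c) (hc1 : c ≤ 1)
    {x₀ : EuclideanSpace ℝ (Fin n)} (hx₀ : x₀ ∈ innerPar Ω K r) :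
    (1 - c) • x₀ +ᵥ c • innerPar Ω K l ⊆ innerPar Ω K (c * l + (1 - c) * r) := by
  rintro _ ⟨_, ⟨a, ha, rfl⟩, rfl⟩
  simpa only [vadd_eq_add, add_comm] using
    smul_add_smul_mem_innerPar hΩ hc (sub_nonneg.2 hc1) (add_sub_cancel c 1) ha hx₀

theorem convex_innerPar (hΩ : Convex ℝ Ω) (l : ℝ) : Convex ℝ (innerPar Ω K l) :=
  fun _ hx _ hy a b ha hb hab => by
    simpa [← add_mul, hab] using smul_add_smul_mem_innerPar hΩ ha hb hab hx hy

theorem isClosed_innerPar (hΩ : IsClosed Ω) (l : ℝ) : IsClosed (innerPar Ω K l) := by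
  have : innerPar Ω K l = ⋂ y ∈ K, (· + l • y) ⁻¹' Ω := by
    ext x; simp [innerPar]
  rw [this]
  exact isClosed_biInter fun y _ => hΩ.preimage (by fun_prop)

theorem isCompact_innerPar (hΩ : IsCompact Ω) (hK : K.Nonempty) (l : ℝ) :
    IsCompact (innerPar Ω K l) := by
  obtain ⟨y₀, hy₀⟩ := hK
  have hsub : innerPar Ω K l ⊆ (· - l • y₀) '' Ω := fun x hx =>
    ⟨x + l • y₀, hx y₀ hy₀, add_sub_cancel_right x _⟩
  exact (hΩ.image (by fun_prop)).of_isClosed_subset (isClosed_innerPar hΩ.isClosed l) hsub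

theorem vadd_smul_subset_innerPar (hK : Convex ℝ K) {a b : ℝ} (ha : 0 ≤ a) (hb : 0 ≤ b)
    {x : EuclideanSpace ℝ (Fin n)} (hx : x ∈ innerPar Ω K (a + b)) :
    x +ᵥ a • K ⊆ innerPar Ω K b := by
  rintro _ ⟨_, ⟨w, hw, rfl⟩, rfl⟩ y hy
  obtain ⟨z, hz, hzw⟩ : a • w + b • y ∈ (a + b) • K := by
    rw [hK.add_smul ha hb]
    exact add_mem_add (smul_mem_smul_set hw) (smul_mem_smul_set hy)
  simpa [hzw, vadd_eq_add, add_assoc] using hx z hz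

theorem interior_innerPar_nonempty (hK : Convex ℝ K) (hKint : (interior K).Nonempty) {l r : ℝ}
    (hl : 0 ≤ l) (hlr : l < r) (hr : (innerPar Ω K r).Nonempty) :
    (interior (innerPar Ω K l)).Nonempty := by
  obtain ⟨x, hx⟩ := hr
  have hsub : x +ᵥ (r - l) • K ⊆ innerPar Ω K l :=
    vadd_smul_subset_innerPar hK (sub_nonneg.2 hlr.le) hl (by rwa [sub_add_cancel])
  refine Nonempty.mono (interior_mono hsub) ?_
  rw [interior_vadd, interior_smul₀ (sub_ne_zero.2 hlr.ne')]
  exact (hKint.smul_set).vadd_set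

theorem isCompact_setOf_innerPar_nonempty_inter_Iic (hΩ : IsCompact Ω) (hK : K.Nonempty)
    (R : ℝ) : IsCompact ({l : ℝ | 0 ≤ l ∧ (innerPar Ω K l).Nonempty} ∩ Iic R) := by
  obtain ⟨y₀, hy₀⟩ := hK
  set P : Set (EuclideanSpace ℝ (Fin n) × ℝ) :=
    Prod.snd ⁻¹' Icc 0 R ∩ ⋂ y ∈ K, (fun p => p.1 + p.2 • y) ⁻¹' Ω
  have hP : IsClosed P := (isClosed_Icc.preimage continuous_snd).inter
    (isClosed_biInter fun y _ => hΩ.isClosed.preimage (by fun_prop))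
  have hPsub : P ⊆ (fun q => (q.1 - q.2 • y₀, q.2)) '' (Ω ×ˢ Icc 0 R) := by
    intro p hp
    simp only [P, mem_inter_iff, mem_preimage, mem_iInter] at hp
    exact ⟨(p.1 + p.2 • y₀, p.2), ⟨hp.2 y₀ hy₀, hp.1⟩, by simp⟩
  convert (((hΩ.prod isCompact_Icc).image (by fun_prop)).of_isClosed_subset hP hPsub).image
    continuous_snd using 1
  ext l
  simp [P, innerPar, Set.Nonempty, and_assoc, and_comm]

theorem innerPar_inrad_nonempty (hΩ : IsCompact Ω) (hK : K.Nonempty) (hr : 0 < inrad Ω K) :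
    (innerPar Ω K (inrad Ω K)).Nonempty := by
  rw [inrad_eq_sSup] at hr ⊢
  set L := {l : ℝ | 0 ≤ l ∧ (innerPar Ω K l).Nonempty}
  -- `sSup` of an empty or unbounded set of reals is the junk value `0`.
  have hne : L.Nonempty := by
    by_contra h
    simp [not_nonempty_iff_eq_empty.1 h] at hr
  have hbdd : BddAbove L := by
    by_contra h
    simp [Real.sSup_of_not_bddAbove h] at hr
  have hL : IsCompact L := by
    convert isCompact_setOf_innerPar_nonempty_inter_Iic hΩ hK (sSup L) using 1
    exact (inter_eq_left.2 fun l hl => mem_Iic.2 (le_csSup hbdd hl)).symm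
  exact (hL.sSup_mem hne).2

end InnerParallelBody

theorem stmt14_general {n : ℕ} (Ω K : Set (EuclideanSpace ℝ (Fin n)))
    (hΩc : IsCompact Ω) (hΩconv : Convex ℝ Ω)
    (hKconv : Convex ℝ K) (hKint : (interior K).Nonempty)
    (lstar : ℝ) (hls : lstar ∈ Set.Ico 0 (inrad Ω K))
    (hvol : ∀ l ∈ Set.Icc lstar (inrad Ω K),
      (volume (innerPar Ω K l)).toReal =
        ((inrad Ω K - l) / (inrad Ω K - lstar)) ^ n *
          (volume (innerPar Ω K lstar)).toReal) :
    ∀ l ∈ Set.Ico lstar (inrad Ω K), ∃ x : EuclideanSpace ℝ (Fin n),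
      innerPar Ω K l =
        x +ᵥ ((inrad Ω K - l) / (inrad Ω K - lstar)) • innerPar Ω K lstar := by
  rintro l ⟨hll, hlr⟩
  obtain ⟨hls0, hlsr⟩ := hls
  set r := inrad Ω K
  have hKne : K.Nonempty := hKint.mono interior_subset
  obtain ⟨x₀, hx₀⟩ := innerPar_inrad_nonempty hΩc hKne (hls0.trans_lt hlsr)
  set c := (r - l) / (r - lstar)
  have hc : 0 < c := div_pos (by linarith) (by linarith)
  have hc1 : c ≤ 1 := div_le_one_of_le₀ (by linarith) (by linarith)
  set S := (1 - c) • x₀ +ᵥ c • innerPar Ω K lstar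
  have hSB : S ⊆ innerPar Ω K l := by
    have hl : l = c * lstar + (1 - c) * r := by
      linear_combination div_mul_cancel₀ (r - l) (show r - lstar ≠ 0 by linarith)
    exact hl ▸ vadd_smul_innerPar_subset hΩconv hc.le hc1 hx₀
  have hS : IsCompact S := ((isCompact_innerPar hΩc hKne lstar).smul c).vadd _
  have hμ : volume (innerPar Ω K l) = volume S := by
    rw [← ENNReal.toReal_eq_toReal_iff' (isCompact_innerPar hΩc hKne l).measure_ne_top
      hS.measure_ne_top, hvol l ⟨hll, hlr.le⟩, measure_vadd,
      Measure.addHaar_smul_of_nonneg _ hc.le, finrank_euclideanSpace_fin, ENNReal.toReal_mul,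
      ENNReal.toReal_ofReal (by positivity)]
  exact ⟨(1 - c) • x₀, ((convex_innerPar hΩconv l).eq_of_isClosed_subset_of_measure_eq
    (interior_innerPar_nonempty hKconv hKint (hls0.trans hll) hlr ⟨x₀, hx₀⟩) hS.isClosed hSB
    hμ hS.measure_ne_top).symm⟩

/-- if the volume of the inner parallel bodies decays exactly like
`((r-λ)/(r-λ*))ⁿ` on `[λ*, r]`, then each `Ω ∼ λK`, `λ ∈ [λ*, r)`, is a translate of
`((r-λ)/(r-λ*)) • (Ω ∼ λ*K)`. -/
theorem stmt14 {n : ℕ} (hn : 1 ≤ n) (Ω K : Set (EuclideanSpace ℝ (Fin n)))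
    (hΩc : IsCompact Ω) (hΩconv : Convex ℝ Ω) (hΩint : (interior Ω).Nonempty)
    (hKc : IsCompact K) (hKconv : Convex ℝ K) (hKint : (interior K).Nonempty)
    (lstar : ℝ) (hls : lstar ∈ Set.Ico 0 (inrad Ω K))
    (hvol : ∀ l ∈ Set.Icc lstar (inrad Ω K),
      (volume (innerPar Ω K l)).toReal =
        ((inrad Ω K - l) / (inrad Ω K - lstar)) ^ n *
          (volume (innerPar Ω K lstar)).toReal) :
    ∀ l ∈ Set.Ico lstar (inrad Ω K), ∃ x : EuclideanSpace ℝ (Fin n),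
      innerPar Ω K l =
        x +ᵥ ((inrad Ω K - l) / (inrad Ω K - lstar)) • innerPar Ω K lstar :=
  stmt14_general Ω K hΩc hΩconv hKconv hKint lstar hls hvol
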